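/- Let α > 0, set β = α/√(1+α) and c = 1/√(1+α), and define u : ℝ × ℝ → ℝ by u(t,x) = (1 - exp(β(x - ct)))^(1/α) for x < ct and u(t,x) = 0 for x ≥ ct. Then at every point (t,x) of the open half-plane {(t,x) : x < ct}, u is differentiable in t, the map x ↦ u(t,x)^α · ∂ₓu(t,x) is differentiable in x, and u satisfies the generalized Fisher–Kolmogoroff equation ∂ₜu(t,x) = ∂ₓ( u(t,x)^α · ∂ₓu(t,x) ) + u(t,x)·(1 - u(t,x)^α). -/

import Mathlib

/-! The solution is a travelling wave `u(t,x) = P(x - ct)`, so the equation reduces to the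
profile ODE `-c P' = (P^α P')' + P (1 - P^α)`. On `ξ < 0` put `e = exp(αcξ)` and `w = 1 - e`;
then `P^α = w`, `P' = -c e P / w` and the flux `P^α P' = -c e P`, after which the ODE is the
identity `c² = 1 - αc²`, i.e. `(1 + α) c² = 1`. -/

open Real Filter Topology

section TravellingWave

variable {U : ℝ → ℝ} {U' c p x t : ℝ}

theorem HasDerivAt.comp_const_sub_mul (hU : HasDerivAt U U' (x - c * t)) :
    HasDerivAt (fun s => U (x - c * s)) (-c * U') t := by
  have hlin : HasDerivAt (fun s => x - c * s) (-c) t := by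
    simpa using ((hasDerivAt_id t).const_mul c).const_sub x
  exact (hU.comp t hlin).congr_deriv (mul_comm _ _)

theorem hasDerivAt_travellingWave_flux {F' : ℝ}
    (hF : HasDerivAt (fun η => U η ^ p * deriv U η) F' (x - c * t)) :
    HasDerivAt (fun y => U (y - c * t) ^ p * deriv (fun z => U (z - c * t)) y) F' x := by
  simpa only [deriv_comp_sub_const] using hF.comp_sub_const x (c * t)

end TravellingWave

/-- The wave profile, with the paper's `β` written as `α * c`. -/
noncomputable def newmanProfile (α c ξ : ℝ) : ℝ :=
  if ξ < 0 then (1 - exp (α * c * ξ)) ^ (1 / α) else 0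

namespace newmanProfile

variable {α c ξ : ℝ}

theorem eventuallyEq (hξ : ξ < 0) :
    newmanProfile α c =ᶠ[𝓝 ξ] fun η => (1 - exp (α * c * η)) ^ (1 / α) := by
  filter_upwards [isOpen_Iio.mem_nhds hξ] with η hη
  exact if_pos hη

theorem one_sub_exp_pos (hα : 0 < α) (hc : 0 < c) (hξ : ξ < 0) :
    0 < 1 - exp (α * c * ξ) :=
  sub_pos.mpr (exp_lt_one_iff.mpr (mul_neg_of_pos_of_neg (mul_pos hα hc) hξ))

theorem rpow_self (hα : 0 < α) (hc : 0 < c) (hξ : ξ < 0) :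
    newmanProfile α c ξ ^ α = 1 - exp (α * c * ξ) := by
  rw [newmanProfile, if_pos hξ, ← rpow_mul (one_sub_exp_pos hα hc hξ).le,
    one_div_mul_cancel hα.ne', rpow_one]

theorem hasDerivAt (hα : 0 < α) (hc : 0 < c) (hξ : ξ < 0) :
    HasDerivAt (newmanProfile α c)
      (-c * exp (α * c * ξ) * newmanProfile α c ξ / (1 - exp (α * c * ξ))) ξ := by
  have hw := one_sub_exp_pos hα hc hξ
  have h := ((((hasDerivAt_id ξ).const_mul (α * c)).exp).const_sub 1).rpow_const
    (p := 1 / α) (Or.inl hw.ne')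
  refine (h.congr_of_eventuallyEq (eventuallyEq hξ)).congr_deriv ?_
  simp only [id, mul_one]
  rw [newmanProfile, if_pos hξ, rpow_sub_one hw.ne']
  field_simp

theorem flux_eventuallyEq (hα : 0 < α) (hc : 0 < c) (hξ : ξ < 0) :
    (fun η => newmanProfile α c η ^ α * deriv (newmanProfile α c) η)
      =ᶠ[𝓝 ξ] fun η => -c * (exp (α * c * η) * newmanProfile α c η) := by
  filter_upwards [isOpen_Iio.mem_nhds hξ] with η hη
  rw [rpow_self hα hc hη, (hasDerivAt hα hc hη).deriv]
  field_simp [(one_sub_exp_pos hα hc hη).ne']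

theorem hasDerivAt_flux (hα : 0 < α) (hc : 0 < c) (hξ : ξ < 0) :
    HasDerivAt (fun η => newmanProfile α c η ^ α * deriv (newmanProfile α c) η)
      (-c * (α * c * exp (α * c * ξ) * newmanProfile α c ξ
        + exp (α * c * ξ) * deriv (newmanProfile α c) ξ)) ξ := by
  have h : HasDerivAt (fun η => -c * (exp (α * c * η) * newmanProfile α c η)) _ ξ :=
    (((hasDerivAt_id ξ).const_mul (α * c)).exp.mul
    (hasDerivAt hα hc hξ).differentiableAt.hasDerivAt).const_mul (-c)
  refine (h.congr_of_eventuallyEq (flux_eventuallyEq hα hc hξ)).congr_deriv ?_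
  simp only [id, mul_one]
  ring

theorem ode (hα : 0 < α) (hc : 0 < c) (hc2 : (1 + α) * c ^ 2 = 1) (hξ : ξ < 0) :
    -c * deriv (newmanProfile α c) ξ
      = deriv (fun η => newmanProfile α c η ^ α * deriv (newmanProfile α c) η) ξ
        + newmanProfile α c ξ * (1 - newmanProfile α c ξ ^ α) := by
  rw [(hasDerivAt_flux hα hc hξ).deriv, (hasDerivAt hα hc hξ).deriv, rpow_self hα hc hξ]
  have hw := (one_sub_exp_pos hα hc hξ).ne'
  set e := exp (α * c * ξ)
  field_simp
  linear_combination e * (1 - e) * newmanProfile α c ξ * hc2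

end newmanProfile

/-- Newman's exact travelling-wave solution
`u(t,x) = (1 - e^{β(x-ct)})^{1/α}` for `x < ct`, `u = 0` otherwise,
with `β = α/√(1+α)` and `c = 1/√(1+α)`, satisfies the generalized
Fisher–Kolmogoroff equation `∂ₜu = ∂ₓ(u^α ∂ₓu) + u(1 - u^α)` on the open
half-plane `{x < ct}`, with the stated derivatives existing there. -/
theorem newman_exact_solution
    (α β c : ℝ) (hα : 0 < α)
    (hβ : β = α / Real.sqrt (1 + α))
    (hc : c = 1 / Real.sqrt (1 + α))
    (u : ℝ → ℝ → ℝ)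
    (hu : ∀ t x : ℝ, u t x =
      if x < c * t then (1 - Real.exp (β * (x - c * t))) ^ (1 / α) else 0) :
    ∀ t x : ℝ, x < c * t →
      DifferentiableAt ℝ (fun s => u s x) t ∧
      DifferentiableAt ℝ (fun y => u t y ^ α * deriv (fun z => u t z) y) x ∧
      deriv (fun s => u s x) t
        = deriv (fun y => u t y ^ α * deriv (fun z => u t z) y) x
          + u t x * (1 - u t x ^ α) := by
  intro t x hx
  have hc0 : 0 < c := by rw [hc]; positivity
  have hc2 : (1 + α) * c ^ 2 = 1 := by
    rw [hc, div_pow, sq_sqrt (by linarith)]; field_simp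
  have hβc : β = α * c := by rw [hβ, hc]; ring
  have hwave : u = fun t x => newmanProfile α c (x - c * t) := by
    funext t x
    simp only [hu, newmanProfile, sub_neg, hβc, mul_assoc]
  subst hwave
  have hξ : x - c * t < 0 := sub_neg.mpr hx
  have htime :=
    (newmanProfile.hasDerivAt hα hc0 hξ).differentiableAt.hasDerivAt.comp_const_sub_mul
  have hflux := hasDerivAt_travellingWave_flux
    (newmanProfile.hasDerivAt_flux hα hc0 hξ).differentiableAt.hasDerivAt
  refine ⟨htime.differentiableAt, hflux.differentiableAt, ?_⟩
  rw [htime.deriv, hflux.deriv]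
  exact newmanProfile.ode hα hc0 hc2 hξ
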